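/- arXiv:2302.06423 — 2 statements merged into one kernel-verified Lean document; each statement's English description precedes it below -/
import Mathlib

section
/- Let g and h be probability density functions on ℝ (with respect to Lebesgue measure) with h(t) > 0 for every t ∈ ℝ, and let t₁ ≤ t₂ be real numbers such that g(t) ≤ h(t) for all t ∉ [t₁,t₂] and g(t) ≥ h(t) for all t ∈ [t₁,t₂]. If T and U are independent random variables on a probability space, T with density h and U uniform on [0,1], then the acceptance probability of Steps 1–2 of the modified rejection sampling satisfies P(U ≤ g(T)/h(T)) = ∫_{(-∞,t₁)} g(t) dt + ∫_{[t₁,t₂]} h(t) dt + ∫_{(t₂,∞)} g(t) dt. -/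
/-!
Conditioning on `T = t`, the candidate is accepted with probability `min (g t / h t) 1`, so
the acceptance probability is `∫ h t * min (g t / h t) 1 dt = ∫ min (g t) (h t) dt`; the
hypotheses on `[t₁, t₂]` say exactly that this minimum is `h` on `[t₁, t₂]` and `g` outside it.
-/

open MeasureTheory ProbabilityTheory Set

theorem measure_le_comp_eq_lintegral_of_indepFun {Ω α : Type*} [MeasurableSpace Ω]
    [MeasurableSpace α] {P : Measure Ω} [IsFiniteMeasure P] {T : Ω → α} {U : Ω → ℝ}
    {f : α → ℝ} (hT : Measurable T) (hU : Measurable U) (hf : Measurable f)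
    (h_indep : IndepFun T U P) :
    P {ω | U ω ≤ f (T ω)} = ∫⁻ t, P.map U (Iic (f t)) ∂P.map T := by
  have hS : MeasurableSet {p : α × ℝ | p.2 ≤ f p.1} :=
    measurableSet_le measurable_snd (hf.comp measurable_fst)
  have h_prod : P.map (fun ω ↦ (T ω, U ω)) = (P.map T).prod (P.map U) :=
    (indepFun_iff_map_prod_eq_prod_map_map hT.aemeasurable hU.aemeasurable).mp h_indep
  calc P {ω | U ω ≤ f (T ω)} = P.map (fun ω ↦ (T ω, U ω)) {p | p.2 ≤ f p.1} :=
        (Measure.map_apply (hT.prodMk hU) hS).symm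
    _ = ∫⁻ t, P.map U (Iic (f t)) ∂P.map T := by
        rw [h_prod, Measure.prod_apply hS]
        rfl

theorem volume_restrict_Icc_zero_one_Iic (x : ℝ) :
    volume.restrict (Icc (0 : ℝ) 1) (Iic x) = ENNReal.ofReal (min x 1) := by
  have h_inter : Iic x ∩ Icc 0 1 = Icc 0 (min x 1) := by
    ext y
    simp only [mem_inter_iff, mem_Iic, mem_Icc, le_min_iff]
    tauto
  rw [Measure.restrict_apply measurableSet_Iic, h_inter, Real.volume_Icc, sub_zero]

theorem mul_min_div_one_eq_min {a b : ℝ} (ha : 0 < a) : a * min (b / a) 1 = min b a := by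
  rw [mul_min_of_nonneg _ _ ha.le, mul_div_cancel₀ _ ha.ne', mul_one]

theorem measure_le_div_eq_lintegral_min {Ω : Type*} [MeasurableSpace Ω] {P : Measure Ω}
    [IsFiniteMeasure P] {g h : ℝ → ℝ} (hg : Measurable g) (hh : Measurable h)
    (hh_pos : ∀ t, 0 < h t) {T U : Ω → ℝ} (hT : Measurable T) (hU : Measurable U)
    (h_indep : IndepFun T U P)
    (hT_law : P.map T = volume.withDensity (fun t ↦ ENNReal.ofReal (h t)))
    (hU_law : P.map U = volume.restrict (Icc (0 : ℝ) 1)) :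
    P {ω | U ω ≤ g (T ω) / h (T ω)} = ∫⁻ t, ENNReal.ofReal (min (g t) (h t)) := by
  have hf : Measurable fun t ↦ g t / h t := hg.div hh
  rw [measure_le_comp_eq_lintegral_of_indepFun hT hU hf h_indep, hT_law, hU_law]
  simp_rw [volume_restrict_Icc_zero_one_Iic]
  rw [lintegral_withDensity_eq_lintegral_mul _ hh.ennreal_ofReal
    (hf.min measurable_const).ennreal_ofReal]
  refine lintegral_congr fun t ↦ ?_
  rw [Pi.mul_apply, ← ENNReal.ofReal_mul (hh_pos t).le, mul_min_div_one_eq_min (hh_pos t)]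

theorem integral_Iio_add_Icc_add_Ioi {E : Type*} [NormedAddCommGroup E] [NormedSpace ℝ E]
    {μ : Measure ℝ} {f : ℝ → E} {a b : ℝ} (hab : a ≤ b) (hf : Integrable f μ) :
    (∫ x in Iio a, f x ∂μ) + (∫ x in Icc a b, f x ∂μ) + (∫ x in Ioi b, f x ∂μ) =
      ∫ x, f x ∂μ := by
  have h_disj : Disjoint (Icc a b) (Ioi b) :=
    (Iic_disjoint_Ioi le_rfl).mono_left Icc_subset_Iic_self
  rw [add_assoc, ← setIntegral_union h_disj measurableSet_Ioi hf.integrableOn hf.integrableOn,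
    Icc_union_Ioi_eq_Ici hab,
    intervalIntegral.integral_Iio_add_Ici hf.integrableOn hf.integrableOn]

/-- The acceptance probability of Steps 1–2 of the modified rejection sampling:
`P(U ≤ g(T)/h(T)) = ∫_{(-∞,t₁)} g + ∫_{[t₁,t₂]} h + ∫_{(t₂,∞)} g`. -/
theorem modified_rejection_sampling_acceptance_probability
    {Ω : Type*} [MeasurableSpace Ω] (P : Measure Ω) [IsProbabilityMeasure P]
    (g h : ℝ → ℝ) (hg_meas : Measurable g) (hh_meas : Measurable h)
    (hg_nonneg : ∀ t, 0 ≤ g t) (hh_pos : ∀ t, 0 < h t)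
    (hg_int : ∫ t, g t = 1) (hh_int : ∫ t, h t = 1)
    (t₁ t₂ : ℝ) (ht : t₁ ≤ t₂)
    (h_out : ∀ t, t ∉ Set.Icc t₁ t₂ → g t ≤ h t)
    (h_in : ∀ t ∈ Set.Icc t₁ t₂, h t ≤ g t)
    (T U : Ω → ℝ) (hT : Measurable T) (hU : Measurable U)
    (h_indep : IndepFun T U P)
    (hT_law : Measure.map T P = volume.withDensity (fun t => ENNReal.ofReal (h t)))
    (hU_law : Measure.map U P = volume.restrict (Set.Icc (0 : ℝ) 1)) :
    (P {ω | U ω ≤ g (T ω) / h (T ω)}).toReal =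
      (∫ t in Set.Iio t₁, g t) + (∫ t in Set.Icc t₁ t₂, h t) + (∫ t in Set.Ioi t₂, g t) := by
  have hg_i : Integrable g := .of_integral_ne_zero (by simp [hg_int])
  have hh_i : Integrable h := .of_integral_ne_zero (by simp [hh_int])
  have hmin_i : Integrable fun t ↦ min (g t) (h t) := hg_i.inf hh_i
  have hmin_nonneg : ∀ t, 0 ≤ min (g t) (h t) := fun t ↦ le_min (hg_nonneg t) (hh_pos t).le
  rw [measure_le_div_eq_lintegral_min hg_meas hh_meas hh_pos hT hU h_indep hT_law hU_law,
    ← ofReal_integral_eq_lintegral_ofReal hmin_i (.of_forall hmin_nonneg),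
    ENNReal.toReal_ofReal (integral_nonneg hmin_nonneg),
    ← integral_Iio_add_Icc_add_Ioi ht hmin_i]
  congr 1
  congr 1
  · exact setIntegral_congr_fun measurableSet_Iio fun t ht' ↦
      min_eq_left (h_out t fun hc ↦ hc.1.not_gt ht')
  · exact setIntegral_congr_fun measurableSet_Icc fun t ht' ↦ min_eq_right (h_in t ht')
  · exact setIntegral_congr_fun measurableSet_Ioi fun t ht' ↦
      min_eq_left (h_out t fun hc ↦ hc.2.not_gt ht')
end

section
/- Fix a positive integer γ and a real α > 0. For β ∈ ℝ and k = 0, 1, 2 define M_k(β) = ∫₀^∞ x^{γ+k} e^{−α²x² + βx} dx, and set μ(β) = M₁(β)/M₀(β) and σ²(β) = M₂(β)/M₀(β) − μ(β)². Then lim_{β → −∞} ( μ(β)/σ²(β) + β ) = 0. -/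
open MeasureTheory Filter

/-- The `k`-shifted moment integral `M_k(β) = ∫₀^∞ x^{γ+k} e^{−α²x² + βx} dx` of the
three-parameter Gamma kernel. -/
noncomputable def g3pMoment (γ : ℕ) (α : ℝ) (k : ℕ) (β : ℝ) : ℝ :=
  ∫ x in Set.Ioi (0 : ℝ), x ^ (γ + k) * Real.exp (-α ^ 2 * x ^ 2 + β * x)

/-- The mean `μ(β) = M₁(β)/M₀(β)` of the three-parameter Gamma distribution G3p(γ,α,β). -/
noncomputable def g3pMean (γ : ℕ) (α : ℝ) (β : ℝ) : ℝ :=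
  g3pMoment γ α 1 β / g3pMoment γ α 0 β

/-- The variance `σ²(β) = M₂(β)/M₀(β) − μ(β)²` of the three-parameter Gamma distribution. -/
noncomputable def g3pVar (γ : ℕ) (α : ℝ) (β : ℝ) : ℝ :=
  g3pMoment γ α 2 β / g3pMoment γ α 0 β - (g3pMean γ α β) ^ 2

/-! With `I_n(α, β) = ∫₀^∞ xⁿ e^{−α²x²+βx} dx`, so that `M_k = I_{γ+k}`, integrating
`d/dx (x^{n+1} e^{−α²x²+βx})` over `(0, ∞)` gives `(n+1) I_n + β I_{n+1} = 2α² I_{n+2}`, which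
turns `c + β` into `2α² (M₃M₀ − M₂M₁) / (M₂M₀ − M₁²)`. The substitution `x = u/b` gives
`c(α, −b) = b · c(α/b, −1)`. As `a → 0` the moments `M_k(a, −1)` tend to the Gamma integrals
`(γ+k)!`, for which `M₂M₀ − M₁² = (γ+1)! γ! ≠ 0`; hence `c(a, −1) − 1 = O(a²)`, and
`c(α, −b) − b = α · (c(α/b, −1) − 1) / (α/b) → 0`. -/

open Set Real
open scoped Nat Topology

lemma neg_mul_sq_add_mul_le {α : ℝ} (hα : α ≠ 0) (β x : ℝ) :
    -α ^ 2 * x ^ 2 + β * x ≤ (β + 1) ^ 2 / (4 * α ^ 2) - x := by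
  have hsq : (β + 1) ^ 2 / (4 * α ^ 2) - x - (-α ^ 2 * x ^ 2 + β * x)
      = (α * x - (β + 1) / (2 * α)) ^ 2 := by
    field_simp
    ring
  rw [← sub_nonneg, hsq]
  positivity

lemma pow_mul_exp_neg_mul_sq_add_le {α : ℝ} (hα : α ≠ 0) (β : ℝ) (n : ℕ) {x : ℝ} (hx : 0 ≤ x) :
    x ^ n * exp (-α ^ 2 * x ^ 2 + β * x)
      ≤ exp ((β + 1) ^ 2 / (4 * α ^ 2)) * (x ^ n * exp (-x)) := by
  rw [mul_left_comm, ← exp_add]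
  exact mul_le_mul_of_nonneg_left (exp_le_exp.2 (by linarith [neg_mul_sq_add_mul_le hα β x]))
    (by positivity)

lemma integrableOn_pow_mul_exp_neg (n : ℕ) :
    IntegrableOn (fun x : ℝ => x ^ n * exp (-x)) (Ioi 0) := by
  refine (GammaIntegral_convergent (s := n + 1) (by positivity)).congr_fun (fun x _ => ?_)
    measurableSet_Ioi
  simp [mul_comm]

lemma setIntegral_pow_mul_exp_neg (n : ℕ) :
    ∫ x in Ioi (0 : ℝ), x ^ n * exp (-x) = n ! := by
  rw [← Gamma_nat_eq_factorial, Gamma_eq_integral (by positivity)]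
  refine setIntegral_congr_fun measurableSet_Ioi fun x _ => ?_
  simp [mul_comm]

lemma integrableOn_pow_mul_exp_neg_mul_sq_add {α : ℝ} (hα : α ≠ 0) (β : ℝ) (n : ℕ) :
    IntegrableOn (fun x => x ^ n * exp (-α ^ 2 * x ^ 2 + β * x)) (Ioi 0) := by
  refine ((integrableOn_pow_mul_exp_neg n).const_mul (exp ((β + 1) ^ 2 / (4 * α ^ 2)))).mono'
    (by fun_prop) ?_
  filter_upwards [ae_restrict_mem measurableSet_Ioi] with x (hx : 0 < x)
  rw [Real.norm_of_nonneg (by positivity)]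
  exact pow_mul_exp_neg_mul_sq_add_le hα β n hx.le

lemma tendsto_pow_mul_exp_neg_mul_sq_add_atTop {α : ℝ} (hα : α ≠ 0) (β : ℝ) (n : ℕ) :
    Tendsto (fun x => x ^ n * exp (-α ^ 2 * x ^ 2 + β * x)) atTop (𝓝 0) := by
  have h := (tendsto_pow_mul_exp_neg_atTop_nhds_zero n).const_mul
    (exp ((β + 1) ^ 2 / (4 * α ^ 2)))
  rw [mul_zero] at h
  refine squeeze_zero' ?_ ?_ h
  · filter_upwards [eventually_ge_atTop 0] with x hx
    positivity
  · filter_upwards [eventually_ge_atTop 0] with x hx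
    exact pow_mul_exp_neg_mul_sq_add_le hα β n hx

lemma g3pMoment_recurrence (γ : ℕ) {α : ℝ} (hα : α ≠ 0) (k : ℕ) (β : ℝ) :
    ((γ + k : ℕ) + 1 : ℝ) * g3pMoment γ α k β + β * g3pMoment γ α (k + 1) β
      = 2 * α ^ 2 * g3pMoment γ α (k + 2) β := by
  set n := γ + k
  let g : ℕ → ℝ → ℝ := fun m x => x ^ m * exp (-α ^ 2 * x ^ 2 + β * x)
  have hg : ∀ m, IntegrableOn (g m) (Ioi 0) :=
    integrableOn_pow_mul_exp_neg_mul_sq_add hα β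
  have hderiv : ∀ x ∈ Ici (0 : ℝ), HasDerivAt (g (n + 1))
      ((n + 1 : ℝ) * g n x + β * g (n + 1) x - 2 * α ^ 2 * g (n + 2) x) x := by
    intro x _
    have hq : HasDerivAt (fun x => -α ^ 2 * x ^ 2 + β * x) (-α ^ 2 * (2 * x) + β) x := by
      simpa using ((hasDerivAt_pow 2 x).const_mul (-α ^ 2)).fun_add ((hasDerivAt_id x).const_mul β)
    refine ((hasDerivAt_pow (n + 1) x).mul hq.exp).congr_deriv ?_
    push_cast
    ring
  have hint := integral_Ioi_of_hasDerivAt_of_tendsto' hderiv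
    ((((hg n).const_mul _).add ((hg (n + 1)).const_mul _)).sub ((hg (n + 2)).const_mul _))
    (tendsto_pow_mul_exp_neg_mul_sq_add_atTop hα β (n + 1))
  rw [integral_sub, integral_add, integral_const_mul, integral_const_mul, integral_const_mul]
    at hint
  · simp only [g, zero_pow n.succ_ne_zero, zero_mul, zero_sub] at hint
    unfold g3pMoment
    linear_combination hint
  · exact (hg n).const_mul _
  · exact (hg (n + 1)).const_mul _
  · exact ((hg n).const_mul _).add ((hg (n + 1)).const_mul _)
  · exact (hg (n + 2)).const_mul _

noncomputable def g3pRate (γ : ℕ) (α β : ℝ) : ℝ :=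
  g3pMean γ α β / g3pVar γ α β

lemma g3pRate_add_eq (γ : ℕ) {α : ℝ} (hα : α ≠ 0) (β : ℝ) (h₀ : g3pMoment γ α 0 β ≠ 0)
    (hD : g3pMoment γ α 2 β * g3pMoment γ α 0 β - g3pMoment γ α 1 β ^ 2 ≠ 0) :
    g3pRate γ α β + β
      = 2 * α ^ 2 * (g3pMoment γ α 3 β * g3pMoment γ α 0 β
          - g3pMoment γ α 2 β * g3pMoment γ α 1 β)
        / (g3pMoment γ α 2 β * g3pMoment γ α 0 β - g3pMoment γ α 1 β ^ 2) := by
  have r₀ := g3pMoment_recurrence γ hα 0 β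
  have r₁ := g3pMoment_recurrence γ hα 1 β
  push_cast at r₀ r₁
  have hvar : g3pVar γ α β
      = (g3pMoment γ α 2 β * g3pMoment γ α 0 β - g3pMoment γ α 1 β ^ 2)
        / g3pMoment γ α 0 β ^ 2 := by
    rw [g3pVar, g3pMean]
    field_simp
  rw [g3pRate, hvar, g3pMean]
  generalize hDdef : g3pMoment γ α 2 β * g3pMoment γ α 0 β - g3pMoment γ α 1 β ^ 2 = D at hD ⊢
  field_simp
  rw [← hDdef]
  linear_combination g3pMoment γ α 0 β * r₁ - g3pMoment γ α 1 β * r₀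

lemma g3pMoment_mul (γ k : ℕ) (α β : ℝ) {b : ℝ} (hb : 0 < b) :
    g3pMoment γ α k (b * β) = g3pMoment γ (α / b) k β / b ^ (γ + k + 1) := by
  have h := integral_comp_mul_left_Ioi
    (fun u => u ^ (γ + k) * exp (-(α / b) ^ 2 * u ^ 2 + β * u)) 0 hb
  have hsub : ∀ x : ℝ, (b * x) ^ (γ + k) * exp (-(α / b) ^ 2 * (b * x) ^ 2 + β * (b * x))
      = b ^ (γ + k) * (x ^ (γ + k) * exp (-α ^ 2 * x ^ 2 + b * β * x)) := fun x => by
    rw [mul_pow]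
    field_simp
  simp only [hsub, integral_const_mul, mul_zero, smul_eq_mul] at h
  rw [g3pMoment, g3pMoment, pow_succ b (γ + k), div_mul_eq_div_div_swap, div_eq_inv_mul _ b, ← h,
    mul_div_cancel_left₀ _ (by positivity)]

lemma g3pMean_mul (γ : ℕ) (α β : ℝ) {b : ℝ} (hb : 0 < b) :
    g3pMean γ α (b * β) = g3pMean γ (α / b) β / b := by
  rw [g3pMean, g3pMean, g3pMoment_mul γ 1 α β hb, g3pMoment_mul γ 0 α β hb, pow_succ b (γ + 1),
    div_mul_eq_div_div_swap, div_div_div_cancel_right₀ (by positivity), div_right_comm]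

lemma g3pVar_mul (γ : ℕ) (α β : ℝ) {b : ℝ} (hb : 0 < b) :
    g3pVar γ α (b * β) = g3pVar γ (α / b) β / b ^ 2 := by
  rw [g3pVar, g3pVar, g3pMean_mul γ α β hb, g3pMoment_mul γ 2 α β hb, g3pMoment_mul γ 0 α β hb,
    show γ + 2 + 1 = γ + 0 + 1 + 2 by ring, pow_add, div_mul_eq_div_div_swap,
    div_div_div_cancel_right₀ (by positivity), div_pow, div_right_comm, sub_div]

lemma g3pRate_mul (γ : ℕ) (α β : ℝ) {b : ℝ} (hb : 0 < b) :
    g3pRate γ α (b * β) = b * g3pRate γ (α / b) β := by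
  rw [g3pRate, g3pRate, g3pMean_mul γ α β hb, g3pVar_mul γ α β hb, div_div_eq_mul_div]
  field_simp

lemma continuous_g3pMoment_neg_one (γ k : ℕ) : Continuous fun α => g3pMoment γ α k (-1) := by
  refine continuous_of_dominated (bound := fun x => x ^ (γ + k) * exp (-x)) (fun α => by fun_prop)
    (fun α => ?_) (integrableOn_pow_mul_exp_neg (γ + k)) (ae_of_all _ fun x => by fun_prop)
  filter_upwards [ae_restrict_mem measurableSet_Ioi] with x (hx : 0 < x)
  rw [Real.norm_of_nonneg (by positivity)]
  gcongr
  nlinarith [sq_nonneg (α * x)]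

lemma g3pMoment_zero_neg_one (γ k : ℕ) : g3pMoment γ 0 k (-1) = (γ + k)! := by
  simp [g3pMoment, ← setIntegral_pow_mul_exp_neg]

lemma tendsto_g3pRate_neg_one_sub_one_div (γ : ℕ) :
    Tendsto (fun a => (g3pRate γ a (-1) - 1) / a) (𝓝[≠] 0) (𝓝 0) := by
  set M : ℕ → ℝ → ℝ := fun k a => g3pMoment γ a k (-1)
  have hM : ∀ k, Tendsto (M k) (𝓝 0) (𝓝 ((γ + k)! : ℝ)) := fun k => by
    simpa only [M, g3pMoment_zero_neg_one] using (continuous_g3pMoment_neg_one γ k).tendsto 0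
  have hN := ((hM 3).mul (hM 0)).sub ((hM 2).mul (hM 1))
  have hD := ((hM 2).mul (hM 0)).sub ((hM 1).pow 2)
  have hD₀ : ((γ + 2)! * (γ + 0)! - (γ + 1)! ^ 2 : ℝ) ≠ 0 := by
    have hfac : ((γ + 2)! * (γ + 0)! - (γ + 1)! ^ 2 : ℝ) = (γ + 1)! * γ ! := by
      rw [Nat.factorial_succ (γ + 1), Nat.factorial_succ γ, add_zero]
      push_cast
      ring
    rw [hfac]
    positivity
  have hlim : Tendsto (fun a => 2 * a * (M 3 a * M 0 a - M 2 a * M 1 a)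
      / (M 2 a * M 0 a - M 1 a ^ 2)) (𝓝 0) (𝓝 0) := by
    simpa only [id, mul_zero, zero_mul, zero_div, Pi.div_def] using
      ((tendsto_id.const_mul 2).mul hN).div hD hD₀
  have hne : ∀ᶠ a in 𝓝 0, M 0 a ≠ 0 ∧ M 2 a * M 0 a - M 1 a ^ 2 ≠ 0 :=
    ((hM 0).eventually_ne (by positivity)).and (hD.eventually_ne hD₀)
  refine (hlim.mono_left nhdsWithin_le_nhds).congr' ?_
  filter_upwards [self_mem_nhdsWithin, nhdsWithin_le_nhds hne] with a (ha : a ≠ 0) ⟨h₀, hD⟩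
  rw [sub_eq_add_neg (g3pRate γ a (-1)), g3pRate_add_eq γ ha (-1) h₀ hD]
  simp only [M]
  field_simp

theorem g3p_rate_tendsto_general (γ : ℕ) (α : ℝ) (hα : 0 < α) :
    Tendsto (fun β : ℝ => g3pMean γ α β / g3pVar γ α β + β) atBot (nhds 0) := by
  rw [← tendsto_comp_neg_atTop_iff]
  have hscale : Tendsto (fun b : ℝ => α / b) atTop (𝓝[≠] 0) := by
    refine tendsto_nhdsWithin_iff.2 ⟨tendsto_const_nhds.div_atTop tendsto_id, ?_⟩
    filter_upwards [eventually_gt_atTop 0] with b hb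
    exact div_ne_zero hα.ne' hb.ne'
  have h := ((tendsto_g3pRate_neg_one_sub_one_div γ).const_mul α).comp hscale
  rw [mul_zero] at h
  refine h.congr' ?_
  filter_upwards [eventually_gt_atTop 0] with b hb
  change α * ((g3pRate γ (α / b) (-1) - 1) / (α / b)) = g3pRate γ α (-b) + -b
  rw [show -b = b * -1 by ring, g3pRate_mul γ α (-1) hb]
  field_simp
  ring

/-- The rate parameter `μ/σ²` of the moment-matched Gamma distribution satisfies
`μ/σ² + β → 0` as `β → −∞`, i.e. `c → −β`. -/
theorem g3p_rate_tendsto (γ : ℕ) (hγ : 0 < γ) (α : ℝ) (hα : 0 < α) :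
    Tendsto (fun β : ℝ => g3pMean γ α β / g3pVar γ α β + β) atBot (nhds 0) :=
  g3p_rate_tendsto_general γ α hα
end
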